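/- Let F = (𝒞_0,𝒞_1,…,𝒞_N) with probability distribution P be a 1/6-representative pair. Then for every training set S of m examples labeled by c and every x ∈ X with g_S(x)·c(x) ≤ 1/3: Pr_{i∼P}[ g_{S(𝒞_i)}(x)·c(x) ≤ 5/6 and i ≠ 0 ] ≥ 1/12. -/

import Mathlib

open MeasureTheory Finset
open scoped ENNReal

noncomputable section

/-- A hypothesis takes values in `{-1, 1}`. -/
def PM1 {X : Type} (h : X → ℝ) : Prop := ∀ x, h x = 1 ∨ h x = -1

/-- The concept class `C` shatters some `k` points: every sign pattern is realized. -/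
def Shatters {X : Type} (C : Set (X → ℝ)) (k : ℕ) : Prop :=
  ∃ xs : Fin k → X, ∀ σ : Fin k → Bool, ∃ h ∈ C, ∀ i, h (xs i) = (if σ i then 1 else -1)

/-- `d` is the VC dimension of `C`: the largest size of a shattered set. -/
def VCdim {X : Type} (C : Set (X → ℝ)) (d : ℕ) : Prop :=
  Shatters C d ∧ ¬ Shatters C (d + 1)

/-- An ERM rule for the target concept `c`: on any sample labeled by `c` it outputs a
member of `C` consistent with the sample. -/
def IsERM {X : Type} {n : ℕ} (C : Set (X → ℝ)) (c : X → ℝ)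
    (ERM : (Fin n → X) → (X → ℝ)) : Prop :=
  ∀ s : Fin n → X, ERM s ∈ C ∧ ∀ k, ERM s (s k) = c (s k)

/-- The bagged voting classifier `f_{S,B}`. -/
def bagF {X : Type} {m n t : ℕ} (ERM : (Fin n → X) → (X → ℝ))
    (S : Fin m → X) (B : Fin t → (Fin n → Fin m)) (x : X) : ℝ :=
  (t : ℝ)⁻¹ * ∑ i : Fin t, ERM (S ∘ B i) x

/-- Margin loss `L^γ_D(f) = Pr_{x∼D}[f(x)·c(x) ≤ γ]`, as a real number. -/
def marginLoss {X : Type} [MeasurableSpace X] (D : Measure X) (c : X → ℝ)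
    (f : X → ℝ) (γ : ℝ) : ℝ :=
  (D {x | f x * c x ≤ γ}).toReal

/-- Uniform probability measure on a finite type. -/
def unif (α : Type) [Fintype α] [MeasurableSpace α] : Measure α :=
  (Fintype.card α : ℝ≥0∞)⁻¹ • Measure.count


/-- The average voting classifier `g_S` over all `m^n` bootstrap samples. -/
def gAvg {X : Type} {m n : ℕ} (ERM : (Fin n → X) → (X → ℝ)) (S : Fin m → X) (x : X) : ℝ :=
  ((m : ℝ) ^ n)⁻¹ * ∑ I : Fin n → Fin m, ERM (S ∘ I) x

/-- The voting classifier `g_{S(𝒞)}` averaging over the bootstrap samples of a bucket. -/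
def gBucket {X : Type} {m n : ℕ} (ERM : (Fin n → X) → (X → ℝ)) (S : Fin m → X)
    (𝒞 : Finset (Fin n → Fin m)) (x : X) : ℝ :=
  ((𝒞.card : ℝ))⁻¹ * ∑ I ∈ 𝒞, ERM (S ∘ I) x

/-- `(F, P)` with `F = (𝒞_0, 𝒞_1, …, 𝒞_N)` (given as `C0` and `Cb`) and
`P = (P0, Pb)` is an `ε`-representative pair: buckets are nonempty, `P` is a probability
distribution, drawing a bucket by `P` and then a uniform element of it yields the
uniform distribution on `[m]^n`, and `P(0) ≤ ε`. -/
def Representative {m n N : ℕ} (C0 : Finset (Fin n → Fin m))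
    (Cb : Fin N → Finset (Fin n → Fin m)) (P0 : ℝ) (Pb : Fin N → ℝ) (ε : ℝ) : Prop :=
  C0.Nonempty ∧ (∀ i, (Cb i).Nonempty) ∧ 0 ≤ P0 ∧ (∀ i, 0 ≤ Pb i) ∧
  P0 + ∑ i, Pb i = 1 ∧
  (∀ I : Fin n → Fin m,
    P0 * (if I ∈ C0 then ((C0.card : ℝ))⁻¹ else 0)
      + ∑ i, Pb i * (if I ∈ Cb i then (((Cb i).card : ℝ))⁻¹ else 0)
      = ((m : ℝ) ^ n)⁻¹) ∧
  P0 ≤ ε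

/-!
Since `P` mixes the uniform distributions on the buckets into the uniform distribution on
`[m]^n`, the margin `g_S(x)·c(x)` is the `P`-average of the bucket margins, all of which lie
in `[-1, 1]`. If the buckets `i ≠ 0` with margin at most `5/6` had mass `q < 1/12`, then with
`P(0) ≤ 1/6` this average would be at least `5/6 - 11/6 · (P(0) + q) > 1/3`.
-/

theorem abs_inv_card_mul_sum_le_one {ι : Type*} {s : Finset ι} (hs : s.Nonempty)
    {f : ι → ℝ} (hf : ∀ i ∈ s, |f i| ≤ 1) : |(#s : ℝ)⁻¹ * ∑ i ∈ s, f i| ≤ 1 := by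
  have hcard : (0 : ℝ) < #s := by exact_mod_cast hs.card_pos
  rw [abs_mul, abs_inv, abs_of_pos hcard, inv_mul_le_iff₀ hcard, mul_one]
  calc |∑ i ∈ s, f i| ≤ ∑ i ∈ s, |f i| := abs_sum_le_sum_abs _ _
    _ ≤ #s • (1 : ℝ) := sum_le_card_nsmul s _ 1 hf
    _ = #s := by simp

theorem sum_ite_mem_inv_card_mul {ι : Type*} [Fintype ι] [DecidableEq ι] (s : Finset ι)
    (f : ι → ℝ) :
    ∑ i, (if i ∈ s then (#s : ℝ)⁻¹ else 0) * f i = (#s : ℝ)⁻¹ * ∑ i ∈ s, f i := by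
  simp only [ite_mul, zero_mul]
  rw [sum_ite_mem, univ_inter, mul_sum]

/-- A reverse Markov inequality. -/
theorem sub_mul_sum_ite_le_sum_mul {ι : Type*} (s : Finset ι) {p a : ι → ℝ}
    (hp : ∀ i ∈ s, 0 ≤ p i) (ha : ∀ i ∈ s, -1 ≤ a i) (θ : ℝ) :
    θ * ∑ i ∈ s, p i - (1 + θ) * ∑ i ∈ s, (if a i ≤ θ then p i else 0)
      ≤ ∑ i ∈ s, p i * a i := by
  rw [mul_sum, mul_sum, ← sum_sub_distrib]
  refine sum_le_sum fun i hi => ?_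
  have hpi := hp i hi
  split_ifs with h
  · nlinarith [ha i hi]
  · nlinarith

section Buckets

variable {X : Type} {m n : ℕ} (ERM : (Fin n → X) → (X → ℝ)) (S : Fin m → X) (x : X)

theorem abs_gBucket_mul_le_one {C : Set (X → ℝ)} (hpm : ∀ h ∈ C, PM1 h) {c : X → ℝ}
    (hc : c ∈ C) (hERM : IsERM C c ERM) {𝒞 : Finset (Fin n → Fin m)} (h𝒞 : 𝒞.Nonempty) :
    |gBucket ERM S 𝒞 x * c x| ≤ 1 := by
  have habs : ∀ {h : X → ℝ}, h ∈ C → |h x| ≤ 1 := fun hh => by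
    rcases hpm _ hh x with h1 | h1 <;> simp [h1]
  rw [abs_mul]
  exact mul_le_one₀ (abs_inv_card_mul_sum_le_one h𝒞 fun I _ => habs (hERM (S ∘ I)).1)
    (abs_nonneg _) (habs hc)

theorem Representative.gAvg_eq {N : ℕ} {C0 : Finset (Fin n → Fin m)}
    {Cb : Fin N → Finset (Fin n → Fin m)} {P0 : ℝ} {Pb : Fin N → ℝ} {ε : ℝ}
    (hrep : Representative C0 Cb P0 Pb ε) :
    gAvg ERM S x = P0 * gBucket ERM S C0 x + ∑ i, Pb i * gBucket ERM S (Cb i) x := by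
  obtain ⟨-, -, -, -, -, huni, -⟩ := hrep
  set f : (Fin n → Fin m) → ℝ := fun I => ERM (S ∘ I) x
  set w : Finset (Fin n → Fin m) → (Fin n → Fin m) → ℝ :=
    fun 𝒞 I => if I ∈ 𝒞 then (#𝒞 : ℝ)⁻¹ else 0
  calc gAvg ERM S x = ∑ I, (P0 * w C0 I + ∑ i, Pb i * w (Cb i) I) * f I := by
        simp only [gAvg, mul_sum, w, f, huni]
    _ = P0 * ∑ I, w C0 I * f I + ∑ i, Pb i * ∑ I, w (Cb i) I * f I := by
        simp only [add_mul, sum_mul, sum_add_distrib, mul_sum, mul_assoc]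
        rw [sum_comm]
    _ = P0 * gBucket ERM S C0 x + ∑ i, Pb i * gBucket ERM S (Cb i) x := by
        simp only [w, sum_ite_mem_inv_card_mul, gBucket, f]

end Buckets

theorem bucket_margin_probability_general
    (X : Type)
    (C : Set (X → ℝ)) (hpm : ∀ h ∈ C, PM1 h) (c : X → ℝ) (hc : c ∈ C)
    (m n : ℕ)
    (ERM : (Fin n → X) → (X → ℝ)) (hERM : IsERM C c ERM)
    (N : ℕ)
    (C0 : Finset (Fin n → Fin m)) (Cb : Fin N → Finset (Fin n → Fin m))
    (P0 : ℝ) (Pb : Fin N → ℝ)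
    (hrep : Representative C0 Cb P0 Pb (1/6))
    (S : Fin m → X) (x : X) (hx : gAvg ERM S x * c x ≤ 1/3) :
    1/12 ≤ ∑ i : Fin N,
      (if gBucket ERM S (Cb i) x * c x ≤ 5/6 then Pb i else 0) := by
  have hmix : gAvg ERM S x * c x
      = P0 * (gBucket ERM S C0 x * c x) + ∑ i, Pb i * (gBucket ERM S (Cb i) x * c x) := by
    rw [hrep.gAvg_eq, add_mul, sum_mul]
    simp only [mul_assoc]
  obtain ⟨hC0, hCb, hP0, hPb, hsum, -, hP0le⟩ := hrep
  have hmargin_ge {𝒞 : Finset (Fin n → Fin m)} (h𝒞 : 𝒞.Nonempty) :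
      -1 ≤ gBucket ERM S 𝒞 x * c x :=
    (abs_le.mp (abs_gBucket_mul_le_one ERM S x hpm hc hERM h𝒞)).1
  have hmarkov := sub_mul_sum_ite_le_sum_mul univ (fun i _ => hPb i)
    (fun i _ => hmargin_ge (hCb i)) (5/6)
  have hbucket0 : -P0 ≤ P0 * (gBucket ERM S C0 x * c x) := by
    nlinarith [hmargin_ge hC0]
  linarith

/-- for a `1/6`-representative pair and any `S`, `x` with
`g_S(x)·c(x) ≤ 1/3`, the `P`-probability that the bucket classifier has margin at most
`5/6` on `x` and the bucket differs from `𝒞_0` is at least `1/12`. -/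
theorem bucket_margin_probability
    (X : Type)
    (C : Set (X → ℝ)) (hpm : ∀ h ∈ C, PM1 h) (c : X → ℝ) (hc : c ∈ C)
    (m n : ℕ) (hm : 0 < m) (hn : 0 < n)
    (ERM : (Fin n → X) → (X → ℝ)) (hERM : IsERM C c ERM)
    (N : ℕ) (hN : 0 < N)
    (C0 : Finset (Fin n → Fin m)) (Cb : Fin N → Finset (Fin n → Fin m))
    (P0 : ℝ) (Pb : Fin N → ℝ)
    (hrep : Representative C0 Cb P0 Pb (1/6))
    (S : Fin m → X) (x : X) (hx : gAvg ERM S x * c x ≤ 1/3) :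
    1/12 ≤ ∑ i : Fin N,
      (if gBucket ERM S (Cb i) x * c x ≤ 5/6 then Pb i else 0) :=
  bucket_margin_probability_general X C hpm c hc m n ERM hERM N C0 Cb P0 Pb hrep S x hx
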